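/- The soft rank energy sRE(ε) converges to the rank energy RE as ε → 0⁺, provided the unregularized discrete OT problem between the joint empirical measure and the target measure has a unique optimal plan (a permutation). -/

import Mathlib

/-! The cost `Q ↦ ∑ C Q` is continuous on the compact transport polytope and the entropy is
bounded there by some `M`, so the entropic plan `P^ε` minimizes the cost up to `2εM`. On a
compact set, approximate minimizers converge to the unique minimizer, hence `P^ε → P`.
Row-normalization is continuous at `P`, whose row sums are `1/N ≠ 0`, and turns the permutation
plan `P` into the hard ranks `h ∘ σ`; continuity of the energy statistic concludes. -/

open Finset Filter Topology

/-- The transportation polytope with uniform marginals `1/N`. -/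
def transportPolytope (N : ℕ) : Set (Matrix (Fin N) (Fin N) ℝ) :=
  {P | (∀ i j, 0 ≤ P i j) ∧
    (∀ i, ∑ j, P i j = 1 / (N : ℝ)) ∧
    (∀ j, ∑ i, P i j = 1 / (N : ℝ))}

/-- Entropy of a nonnegative matrix (with `0 log 0 = 0`, as `Real.log 0 = 0`). -/
noncomputable def matrixEntropy {N : ℕ} (P : Matrix (Fin N) (Fin N) ℝ) : ℝ :=
  -∑ i, ∑ j, P i j * Real.log (P i j)

/-- Soft ranks computed from a (row-normalized) plan `P` and target points `h`. -/
noncomputable def softRanks {N d : ℕ} (P : Matrix (Fin N) (Fin N) ℝ)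
    (h : Fin N → EuclideanSpace ℝ (Fin d)) : Fin N → EuclideanSpace ℝ (Fin d) :=
  fun i => ∑ j, (P i j / ∑ k, P i k) • h j

/-- The two-sample energy statistic. -/
noncomputable def energyStat {d m n : ℕ} (a : Fin m → EuclideanSpace ℝ (Fin d))
    (b : Fin n → EuclideanSpace ℝ (Fin d)) : ℝ :=
  (2 / ((m : ℝ) * n)) * ∑ i, ∑ j, ‖a i - b j‖
    - (1 / (m : ℝ) ^ 2) * ∑ i, ∑ j, ‖a i - a j‖
    - (1 / (n : ℝ) ^ 2) * ∑ i, ∑ j, ‖b i - b j‖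

theorem IsCompact.tendsto_nhds_of_tendsto_comp_of_unique_isMinOn {X ι α : Type*}
    [TopologicalSpace X] [TopologicalSpace α] [T2Space α] [Preorder α]
    {K : Set X} {f : X → α} {p : X} {l : Filter ι} {x : ι → X}
    (hK : IsCompact K) (hf : Continuous f) (hpmin : IsMinOn f K p)
    (hunique : ∀ q ∈ K, IsMinOn f K q → q = p)
    (hxK : ∀ᶠ i in l, x i ∈ K) (hfx : Tendsto (f ∘ x) l (𝓝 (f p))) :
    Tendsto x l (𝓝 p) := by
  refine hK.tendsto_nhds_of_unique_mapClusterPt hxK fun q hqK hq => hunique q hqK ?_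
  have hfq : f q = f p :=
    eq_of_nhds_neBot ((hq.continuousAt_comp hf.continuousAt).clusterPt.mono hfx).neBot
  exact fun y hy => hfq ▸ hpmin hy

theorem IsMinOn.le_add_mul_of_sub_mul {X : Type*} {K : Set X} {f g : X → ℝ} {x p : X} {ε M : ℝ}
    (hε : 0 ≤ ε) (hmin : IsMinOn (fun y => f y - ε * g y) K x) (hx : x ∈ K) (hp : p ∈ K)
    (hg : ∀ y ∈ K, |g y| ≤ M) :
    f x ≤ f p + ε * (2 * M) := by
  have hgap : g x - g p ≤ 2 * M := by
    linarith [(abs_le.mp (hg x hx)).2, (abs_le.mp (hg p hp)).1]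
  have : f x - ε * g x ≤ f p - ε * g p := hmin hp
  linarith [mul_le_mul_of_nonneg_left hgap hε]

theorem IsCompact.tendsto_nhdsGT_of_isMinOn_sub_mul {X : Type*} [TopologicalSpace X]
    {K : Set X} {f g : X → ℝ} {p : X} {M : ℝ} {x : ℝ → X}
    (hK : IsCompact K) (hf : Continuous f) (hg : ∀ y ∈ K, |g y| ≤ M)
    (hp : p ∈ K) (hpmin : IsMinOn f K p) (hunique : ∀ q ∈ K, IsMinOn f K q → q = p)
    (hx : ∀ ε : ℝ, 0 < ε → x ε ∈ K ∧ IsMinOn (fun y => f y - ε * g y) K (x ε)) :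
    Tendsto x (𝓝[>] 0) (𝓝 p) := by
  have hxK : ∀ᶠ ε in 𝓝[>] (0 : ℝ), x ε ∈ K :=
    eventually_nhdsWithin_of_forall fun ε hε => (hx ε hε).1
  refine hK.tendsto_nhds_of_tendsto_comp_of_unique_isMinOn hf hpmin hunique hxK ?_
  have hgap : Tendsto (fun ε : ℝ => f p + ε * (2 * M)) (𝓝[>] 0) (𝓝 (f p)) := by
    have := (tendsto_id (x := 𝓝 (0 : ℝ))).mul_const (2 * M) |>.const_add (f p)
    simpa using this.mono_left nhdsWithin_le_nhds
  refine tendsto_of_tendsto_of_tendsto_of_le_of_le' tendsto_const_nhds hgap ?_ ?_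
  · filter_upwards [hxK] with ε hε using hpmin hε
  · filter_upwards [self_mem_nhdsWithin] with ε (hε : 0 < ε)
    exact (hx ε hε).2.le_add_mul_of_sub_mul hε.le (hx ε hε).1 hp hg

theorem isClosed_transportPolytope (N : ℕ) : IsClosed (transportPolytope N) := by
  simp only [transportPolytope, Set.ofPred_and, Set.ofPred_forall]
  refine .inter (isClosed_iInter fun i => isClosed_iInter fun j => isClosed_le ?_ ?_)
    (.inter (isClosed_iInter fun i => isClosed_eq ?_ ?_)
      (isClosed_iInter fun j => isClosed_eq ?_ ?_))
  all_goals fun_prop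

theorem isCompact_transportPolytope (N : ℕ) : IsCompact (transportPolytope N) := by
  have hbox : transportPolytope N ⊆
      Set.univ.pi fun _ : Fin N => Set.univ.pi fun _ : Fin N => Set.Icc (0 : ℝ) (1 / N) :=
    fun Q hQ i _ j _ => ⟨hQ.1 i j, (single_le_sum (fun k _ => hQ.1 i k) (mem_univ j)).trans_eq
      (hQ.2.1 i)⟩
  exact (isCompact_univ_pi fun _ => isCompact_univ_pi fun _ => isCompact_Icc).of_isClosed_subset
    (isClosed_transportPolytope N) hbox

theorem continuous_matrixEntropy (N : ℕ) : Continuous (matrixEntropy (N := N)) := by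
  unfold matrixEntropy
  fun_prop

theorem continuous_energyStat (d m n : ℕ) :
    Continuous fun ab : (Fin m → EuclideanSpace ℝ (Fin d)) × (Fin n → EuclideanSpace ℝ (Fin d)) =>
      energyStat ab.1 ab.2 := by
  unfold energyStat
  fun_prop

theorem Filter.Tendsto.energyStat {ι : Type*} {d m n : ℕ} {l : Filter ι}
    {a : ι → Fin m → EuclideanSpace ℝ (Fin d)} {b : ι → Fin n → EuclideanSpace ℝ (Fin d)}
    {a₀ : Fin m → EuclideanSpace ℝ (Fin d)} {b₀ : Fin n → EuclideanSpace ℝ (Fin d)}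
    (ha : Tendsto a l (𝓝 a₀)) (hb : Tendsto b l (𝓝 b₀)) :
    Tendsto (fun x => energyStat (a x) (b x)) l (𝓝 (energyStat a₀ b₀)) := by
  -- elaborating `comp` against the goal would unfold `energyStat`
  have h := ((continuous_energyStat d m n).tendsto (a₀, b₀)).comp (ha.prodMk_nhds hb)
  exact h

theorem continuousAt_softRanks {N d : ℕ} (h : Fin N → EuclideanSpace ℝ (Fin d))
    {P : Matrix (Fin N) (Fin N) ℝ} (hP : ∀ i, ∑ k, P i k ≠ 0) :
    ContinuousAt (fun Q : Matrix (Fin N) (Fin N) ℝ => softRanks Q h) P := by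
  unfold softRanks
  fun_prop (disch := exact hP _)

theorem softRanks_eq_comp_perm {N d : ℕ} (h : Fin N → EuclideanSpace ℝ (Fin d))
    {P : Matrix (Fin N) (Fin N) ℝ} {σ : Equiv.Perm (Fin N)} {c : ℝ} (hc : c ≠ 0)
    (hP : ∀ i j, P i j = if j = σ i then c else 0) :
    softRanks P h = h ∘ σ := by
  ext1 i
  simp [softRanks, hP, ite_div, div_self hc]

theorem tendsto_nhdsGT_of_isMinOn_sub_mul_matrixEntropy {N : ℕ} {C P : Matrix (Fin N) (Fin N) ℝ}
    {Pe : ℝ → Matrix (Fin N) (Fin N) ℝ} (hP : P ∈ transportPolytope N)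
    (hPmin : IsMinOn (fun Q => ∑ i, ∑ j, C i j * Q i j) (transportPolytope N) P)
    (hPunique : ∀ Q ∈ transportPolytope N,
      IsMinOn (fun Q => ∑ i, ∑ j, C i j * Q i j) (transportPolytope N) Q → Q = P)
    (hPe : ∀ ε : ℝ, 0 < ε → Pe ε ∈ transportPolytope N ∧
      IsMinOn (fun Q => ∑ i, ∑ j, C i j * Q i j - ε * matrixEntropy Q)
        (transportPolytope N) (Pe ε)) :
    Tendsto Pe (𝓝[>] 0) (𝓝 P) := by
  obtain ⟨M, hM⟩ := (isCompact_transportPolytope N).exists_bound_of_continuousOn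
    (continuous_matrixEntropy N).continuousOn
  exact (isCompact_transportPolytope N).tendsto_nhdsGT_of_isMinOn_sub_mul (by fun_prop)
    (fun Q hQ => hM Q hQ) hP hPmin hPunique hPe

theorem soft_rank_energy_tendsto_rank_energy_general (d m n : ℕ) (hm : 0 < m)
    (h : Fin (m + n) → EuclideanSpace ℝ (Fin d))
    -- the cost matrix between the pooled samples and the target points
    (C : Matrix (Fin (m + n)) (Fin (m + n)) ℝ)
    -- the optimal unregularized plan, assumed unique and a scaled permutation
    (P : Matrix (Fin (m + n)) (Fin (m + n)) ℝ) (σ : Equiv.Perm (Fin (m + n)))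
    (hP : P ∈ transportPolytope (m + n))
    (hPmin : IsMinOn (fun Q => ∑ i, ∑ j, C i j * Q i j) (transportPolytope (m + n)) P)
    (hPunique : ∀ Q ∈ transportPolytope (m + n),
      IsMinOn (fun Q => ∑ i, ∑ j, C i j * Q i j) (transportPolytope (m + n)) Q → Q = P)
    (hPperm : ∀ i j, P i j = if j = σ i then 1 / ((m + n : ℕ) : ℝ) else 0)
    -- the entropic plans
    (Pe : ℝ → Matrix (Fin (m + n)) (Fin (m + n)) ℝ)
    (hPe : ∀ ε : ℝ, 0 < ε → Pe ε ∈ transportPolytope (m + n) ∧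
      IsMinOn (fun Q => ∑ i, ∑ j, C i j * Q i j - ε * matrixEntropy Q)
        (transportPolytope (m + n)) (Pe ε)) :
    Tendsto
      (fun ε =>
        energyStat (fun i : Fin m => softRanks (Pe ε) h (Fin.castAdd n i))
          (fun j : Fin n => softRanks (Pe ε) h (Fin.natAdd m j)))
      (𝓝[>] (0:ℝ))
      (𝓝 (energyStat (fun i : Fin m => h (σ (Fin.castAdd n i)))
        (fun j : Fin n => h (σ (Fin.natAdd m j))))) := by
  have hc : 1 / ((m + n : ℕ) : ℝ) ≠ 0 := one_div_ne_zero (Nat.cast_ne_zero.2 (by omega))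
  have hrow : ∀ i, ∑ k, P i k ≠ 0 := fun i => (hP.2.1 i).symm ▸ hc
  have hplans : Tendsto Pe (𝓝[>] 0) (𝓝 P) :=
    tendsto_nhdsGT_of_isMinOn_sub_mul_matrixEntropy hP hPmin hPunique hPe
  have hranks : Tendsto (fun ε => softRanks (Pe ε) h) (𝓝[>] 0) (𝓝 (h ∘ σ)) := by
    rw [← softRanks_eq_comp_perm h hc hPperm]
    exact (continuousAt_softRanks h hrow).tendsto.comp hplans
  have hX : Tendsto (fun ε i => softRanks (Pe ε) h (Fin.castAdd n i)) (𝓝[>] 0)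
      (𝓝 fun i => h (σ (Fin.castAdd n i))) :=
    tendsto_pi_nhds.2 fun i => tendsto_pi_nhds.1 hranks (Fin.castAdd n i)
  have hY : Tendsto (fun ε j => softRanks (Pe ε) h (Fin.natAdd m j)) (𝓝[>] 0)
      (𝓝 fun j => h (σ (Fin.natAdd m j))) :=
    tendsto_pi_nhds.2 fun j => tendsto_pi_nhds.1 hranks (Fin.natAdd m j)
  exact hX.energyStat hY

/-- The soft rank energy `sRE(ε)` converges to the rank energy `RE` as `ε → 0⁺`,
provided the unregularized discrete OT problem between the joint empirical measure
and the target measure has a unique optimal plan, which is a (scaled) permutation. -/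
theorem soft_rank_energy_tendsto_rank_energy (d m n : ℕ) (hm : 0 < m) (hn : 0 < n)
    (X : Fin m → EuclideanSpace ℝ (Fin d)) (Y : Fin n → EuclideanSpace ℝ (Fin d))
    (h : Fin (m + n) → EuclideanSpace ℝ (Fin d))
    (hcube : ∀ j, ∀ l, h j l ∈ Set.Icc (0:ℝ) 1)
    -- the cost matrix between the pooled samples and the target points
    (C : Matrix (Fin (m + n)) (Fin (m + n)) ℝ)
    (hC : ∀ i j, C i j = ‖Fin.append X Y i - h j‖ ^ 2)
    -- the optimal unregularized plan, assumed unique and a scaled permutation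
    (P : Matrix (Fin (m + n)) (Fin (m + n)) ℝ) (σ : Equiv.Perm (Fin (m + n)))
    (hP : P ∈ transportPolytope (m + n))
    (hPmin : IsMinOn (fun Q => ∑ i, ∑ j, C i j * Q i j) (transportPolytope (m + n)) P)
    (hPunique : ∀ Q ∈ transportPolytope (m + n),
      IsMinOn (fun Q => ∑ i, ∑ j, C i j * Q i j) (transportPolytope (m + n)) Q → Q = P)
    (hPperm : ∀ i j, P i j = if j = σ i then 1 / ((m + n : ℕ) : ℝ) else 0)
    -- the entropic plans
    (Pe : ℝ → Matrix (Fin (m + n)) (Fin (m + n)) ℝ)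
    (hPe : ∀ ε : ℝ, 0 < ε → Pe ε ∈ transportPolytope (m + n) ∧
      IsMinOn (fun Q => ∑ i, ∑ j, C i j * Q i j - ε * matrixEntropy Q)
        (transportPolytope (m + n)) (Pe ε)) :
    Tendsto
      (fun ε =>
        energyStat (fun i : Fin m => softRanks (Pe ε) h (Fin.castAdd n i))
          (fun j : Fin n => softRanks (Pe ε) h (Fin.natAdd m j)))
      (𝓝[>] (0:ℝ))
      (𝓝 (energyStat (fun i : Fin m => h (σ (Fin.castAdd n i)))
        (fun j : Fin n => h (σ (Fin.natAdd m j))))) :=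
  soft_rank_energy_tendsto_rank_energy_general d m n hm h C P σ hP hPmin hPunique hPperm Pe hPe
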